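/- arXiv:1610.03705 — 2 statements merged into one kernel-verified Lean document; each statement's English description precedes it below -/
import Mathlib

section
/- For all integers m ≥ 1, t ≥ 0 and 1 ≤ i ≤ t, the number of vertices of the Koch network K_{m,t} that have degree exactly 2(m+1)^{t-i} equals 6m(3m+1)^{i-1}, and the number of vertices of degree exactly 2(m+1)^t equals 3 (these are the initial vertices). -/
/-- The triangles of the Koch network `K_{m,t}`: at step `t+1`, each old triangle survives and
each (triangle, corner, group) creates a new triangle. -/
def KochTri (m : ℕ) : ℕ → Type
  | 0 => Unit
  | t+1 => KochTri m t ⊕ (KochTri m t × Fin 3 × Fin m)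

/-- The vertices of the Koch network `K_{m,t}`: at step `t+1`, each (triangle, corner, group)
creates two new vertices. -/
def KochVertex (m : ℕ) : ℕ → Type
  | 0 => Fin 3
  | t+1 => KochVertex m t ⊕ (KochTri m t × Fin 3 × Fin m × Fin 2)

/-- The three corner vertices of each triangle. -/
def KochCorner (m : ℕ) : ∀ t, KochTri m t → Fin 3 → KochVertex m t
  | 0, _, i => i
  | t+1, Sum.inl τ, i => Sum.inl (KochCorner m t τ i)
  | t+1, Sum.inr (τ, c, g), i =>
      ![Sum.inl (KochCorner m t τ c), Sum.inr (τ, c, g, 0), Sum.inr (τ, c, g, 1)] i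

instance KochTri.instDecidableEq (m : ℕ) : ∀ t, DecidableEq (KochTri m t)
  | 0 => inferInstanceAs (DecidableEq Unit)
  | t+1 =>
    letI := KochTri.instDecidableEq m t
    inferInstanceAs (DecidableEq (KochTri m t ⊕ (KochTri m t × Fin 3 × Fin m)))

instance KochVertex.instDecidableEq (m : ℕ) : ∀ t, DecidableEq (KochVertex m t)
  | 0 => inferInstanceAs (DecidableEq (Fin 3))
  | t+1 =>
    letI := KochVertex.instDecidableEq m t
    letI := KochTri.instDecidableEq m t
    inferInstanceAs (DecidableEq (KochVertex m t ⊕ (KochTri m t × Fin 3 × Fin m × Fin 2)))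

instance KochTri.instFintype (m : ℕ) : ∀ t, Fintype (KochTri m t)
  | 0 => inferInstanceAs (Fintype Unit)
  | t+1 =>
    letI := KochTri.instFintype m t
    inferInstanceAs (Fintype (KochTri m t ⊕ (KochTri m t × Fin 3 × Fin m)))

instance KochVertex.instFintype (m : ℕ) : ∀ t, Fintype (KochVertex m t)
  | 0 => inferInstanceAs (Fintype (Fin 3))
  | t+1 =>
    letI := KochVertex.instFintype m t
    letI := KochTri.instFintype m t
    inferInstanceAs (Fintype (KochVertex m t ⊕ (KochTri m t × Fin 3 × Fin m × Fin 2)))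

/-- The Koch network `K_{m,t}`: two distinct vertices are adjacent iff they are corners of a
common triangle. -/
def KochGraph (m t : ℕ) : SimpleGraph (KochVertex m t) where
  Adj u v := u ≠ v ∧ ∃ (τ : KochTri m t) (i j : Fin 3),
      KochCorner m t τ i = u ∧ KochCorner m t τ j = v
  symm := ⟨by rintro u v ⟨hne, τ, i, j, hi, hj⟩; exact ⟨hne.symm, τ, j, i, hj, hi⟩⟩
  loopless := ⟨by rintro u ⟨hne, -⟩; exact hne rfl⟩

instance (m t : ℕ) : DecidableRel (KochGraph m t).Adj := fun u v =>
  inferInstanceAs (Decidable (u ≠ v ∧ ∃ (τ : KochTri m t) (i j : Fin 3),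
      KochCorner m t τ i = u ∧ KochCorner m t τ j = v))

/-- The step at which a vertex of `K_{m,t}` was added (initial vertices are added at step 0). -/
def KochBirth (m : ℕ) : ∀ t, KochVertex m t → ℕ
  | 0, _ => 0
  | t+1, Sum.inl v => KochBirth m t v
  | t+1, Sum.inr _ => t+1

/-- The canonical inclusion of `K_{m,t}` into `K_{m,t+1}`. -/
def KochInl (m t : ℕ) (v : KochVertex m t) : KochVertex m (t+1) := Sum.inl v

/-- The other member of the group of two with which a (non-initial) vertex was added. -/
def KochSibling (m : ℕ) : ∀ t, KochVertex m t → KochVertex m t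
  | 0, v => v
  | t+1, Sum.inl v => Sum.inl (KochSibling m t v)
  | t+1, Sum.inr (τ, c, g, p) => Sum.inr (τ, c, g, if p = 0 then 1 else 0)

/-- The father vertex of a (non-initial) vertex: the existing vertex to which its group of two
was attached. -/
def KochFather (m : ℕ) : ∀ t, KochVertex m t → KochVertex m t
  | 0, v => v
  | t+1, Sum.inl v => Sum.inl (KochFather m t v)
  | t+1, Sum.inr (τ, c, _, _) => Sum.inl (KochCorner m t τ c)

/-!
A vertex added at step `s` lies on exactly one triangle when it is added, and each later step
attaches `m` new triangles to every triangle at an existing vertex; so it is a corner of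
`(m+1)^(t-s)` triangles of `K_{m,t}`, and its degree is twice that. For `m ≥ 1` the degree
therefore determines the step `s`, and the vertices added at step `s ≥ 1` are the `6m` new
vertices per triangle of `K_{m,s-1}`, of which there are `(3m+1)^(s-1)`.
-/

open Finset

section

variable {m t : ℕ}

lemma SimpleGraph.degree_eq_sum_ite {V : Type*} [Fintype V] (G : SimpleGraph V)
    [DecidableRel G.Adj] (v : V) : G.degree v = ∑ u, if G.Adj v u then 1 else 0 := by
  rw [← G.card_neighborFinset_eq_degree, G.neighborFinset_eq_filter, card_filter]

lemma sum_kochTri_succ {M : Type*} [AddCommMonoid M] (f : KochTri m (t+1) → M) :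
    ∑ σ, f σ = ∑ τ : KochTri m t, f (Sum.inl τ)
      + ∑ x : KochTri m t × Fin 3 × Fin m, f (Sum.inr x) :=
  Fintype.sum_sum_type f

lemma sum_kochVertex_succ {M : Type*} [AddCommMonoid M] (f : KochVertex m (t+1) → M) :
    ∑ v, f v = ∑ u : KochVertex m t, f (Sum.inl u)
      + ∑ w : KochTri m t × Fin 3 × Fin m × Fin 2, f (Sum.inr w) :=
  Fintype.sum_sum_type f

lemma card_kochTri : ∀ t, Fintype.card (KochTri m t) = (3 * m + 1) ^ t
  | 0 => rfl
  | t + 1 => by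
    rw [← Finset.card_univ, Finset.card_eq_sum_ones, sum_kochTri_succ]
    simp [card_kochTri t]
    ring

lemma kochBirth_le : ∀ {t} (v : KochVertex m t), KochBirth m t v ≤ t
  | 0, _ => le_rfl
  | t + 1, Sum.inl v => (kochBirth_le (t := t) v).trans t.le_succ
  | _ + 1, Sum.inr _ => le_rfl

/- `KochVertex m (t+1)` is a sum type only up to unfolding, so the `Sum` simp lemmas do not fire
on equations stated at this type. -/
@[simp] lemma kochVertex_succ_inl_inj {u v : KochVertex m t} :
    @Eq (KochVertex m (t+1)) (Sum.inl u) (Sum.inl v) ↔ u = v :=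
  Sum.inl_injective.eq_iff

@[simp] lemma kochVertex_succ_inr_inj {w w' : KochTri m t × Fin 3 × Fin m × Fin 2} :
    @Eq (KochVertex m (t+1)) (Sum.inr w) (Sum.inr w') ↔ w = w' :=
  Sum.inr_injective.eq_iff

lemma kochCorner_succ_inl (τ : KochTri m t) (i : Fin 3) :
    KochCorner m (t+1) (Sum.inl τ) i = Sum.inl (KochCorner m t τ i) := rfl

lemma kochCorner_succ_inr_eq_inl_iff (τ : KochTri m t) (c : Fin 3) (g : Fin m) (i : Fin 3)
    (u : KochVertex m t) :
    KochCorner m (t+1) (Sum.inr (τ, c, g)) i = Sum.inl u ↔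
      i = 0 ∧ KochCorner m t τ c = u := by
  fin_cases i <;> simp [KochCorner]

lemma kochCorner_succ_inr_eq_inr_iff (τ τ' : KochTri m t) (c c' : Fin 3) (g g' : Fin m)
    (i : Fin 3) (p : Fin 2) :
    KochCorner m (t+1) (Sum.inr (τ, c, g)) i = Sum.inr (τ', c', g', p) ↔
      τ = τ' ∧ c = c' ∧ g = g' ∧ i = p.succ := by
  fin_cases i <;> fin_cases p <;> simp [KochCorner]

lemma kochGraph_adj_zero {u v : KochVertex m 0} : (KochGraph m 0).Adj u v ↔ u ≠ v :=
  ⟨And.left, fun h => ⟨h, (), u, v, rfl, rfl⟩⟩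

lemma kochGraph_adj_inl_inl {u v : KochVertex m t} :
    (KochGraph m (t+1)).Adj (Sum.inl u) (Sum.inl v) ↔ (KochGraph m t).Adj u v := by
  constructor
  · rintro ⟨hne, (τ | ⟨τ, c, g⟩), i, j, hi, hj⟩
    · exact ⟨fun h => hne (h ▸ rfl), τ, i, j, Sum.inl_injective hi, Sum.inl_injective hj⟩
    · rw [kochCorner_succ_inr_eq_inl_iff] at hi hj
      exact absurd (hi.2.symm.trans hj.2 ▸ rfl) hne
  · rintro ⟨hne, τ, i, j, rfl, rfl⟩
    exact ⟨fun h => hne (Sum.inl_injective h), Sum.inl τ, i, j, rfl, rfl⟩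

lemma kochGraph_adj_inl_inr {u : KochVertex m t} {τ : KochTri m t} {c : Fin 3} {g : Fin m}
    {p : Fin 2} :
    (KochGraph m (t+1)).Adj (Sum.inl u) (Sum.inr (τ, c, g, p)) ↔ KochCorner m t τ c = u := by
  constructor
  · rintro ⟨-, (τ' | ⟨τ', c', g'⟩), i, j, hi, hj⟩
    · exact absurd hj Sum.inl_ne_inr
    · rw [kochCorner_succ_inr_eq_inl_iff] at hi
      rw [kochCorner_succ_inr_eq_inr_iff] at hj
      obtain ⟨rfl, rfl, -, -⟩ := hj
      exact hi.2
  · rintro rfl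
    exact ⟨Sum.inl_ne_inr, Sum.inr (τ, c, g), 0, p.succ, rfl,
      (kochCorner_succ_inr_eq_inr_iff ..).2 ⟨rfl, rfl, rfl, rfl⟩⟩

lemma kochGraph_adj_inr_inr {τ τ' : KochTri m t} {c c' : Fin 3} {g g' : Fin m} {p p' : Fin 2} :
    (KochGraph m (t+1)).Adj (Sum.inr (τ, c, g, p)) (Sum.inr (τ', c', g', p')) ↔
      τ = τ' ∧ c = c' ∧ g = g' ∧ p ≠ p' := by
  constructor
  · rintro ⟨hne, (σ | ⟨σ, d, h⟩), i, j, hi, hj⟩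
    · exact absurd hi Sum.inl_ne_inr
    · rw [kochCorner_succ_inr_eq_inr_iff] at hi hj
      obtain ⟨rfl, rfl, rfl, -⟩ := hi
      obtain ⟨rfl, rfl, rfl, -⟩ := hj
      exact ⟨rfl, rfl, rfl, fun h => hne (h ▸ rfl)⟩
  · rintro ⟨rfl, rfl, rfl, hp⟩
    exact ⟨fun h => hp (congrArg (·.2.2.2) (Sum.inr_injective h)), Sum.inr (τ, c, g), p.succ,
      p'.succ, (kochCorner_succ_inr_eq_inr_iff ..).2 ⟨rfl, rfl, rfl, rfl⟩,
      (kochCorner_succ_inr_eq_inr_iff ..).2 ⟨rfl, rfl, rfl, rfl⟩⟩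

def kochCornerCount (m t : ℕ) (v : KochVertex m t) : ℕ :=
  #{x : KochTri m t × Fin 3 | KochCorner m t x.1 x.2 = v}

lemma kochCornerCount_zero (v : KochVertex m 0) : kochCornerCount m 0 v = 1 := by
  rw [kochCornerCount, Finset.card_eq_one]
  refine ⟨((), v), ?_⟩
  ext ⟨⟨⟩, i⟩
  simp only [mem_filter, mem_univ, true_and, mem_singleton]
  exact ⟨fun h => h ▸ rfl, congrArg Prod.snd⟩

lemma kochCornerCount_succ_inl (v : KochVertex m t) :
    kochCornerCount m (t+1) (Sum.inl v) = (m + 1) * kochCornerCount m t v := by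
  simp only [kochCornerCount, card_filter, Fintype.sum_prod_type]
  rw [sum_kochTri_succ]
  simp only [Fintype.sum_prod_type, kochCorner_succ_inl, kochVertex_succ_inl_inj,
    kochCorner_succ_inr_eq_inl_iff, ite_and, Finset.sum_ite_eq', Finset.mem_univ, if_true,
    Finset.sum_const, Finset.card_univ, Fintype.card_fin, smul_eq_mul, ← Finset.mul_sum]
  ring

lemma kochCornerCount_succ_inr (w : KochTri m t × Fin 3 × Fin m × Fin 2) :
    kochCornerCount m (t+1) (Sum.inr w) = 1 := by
  obtain ⟨τ, c, g, p⟩ := w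
  simp only [kochCornerCount, card_filter, Fintype.sum_prod_type]
  rw [sum_kochTri_succ]
  simp only [Fintype.sum_prod_type, kochCorner_succ_inl, kochCorner_succ_inr_eq_inr_iff]
  simp [ite_and, Finset.sum_ite_eq']

lemma kochCornerCount_eq_pow : ∀ {t} (v : KochVertex m t),
    kochCornerCount m t v = (m + 1) ^ (t - KochBirth m t v)
  | 0, v => kochCornerCount_zero v
  | t + 1, Sum.inl v => by
    rw [kochCornerCount_succ_inl, kochCornerCount_eq_pow v, ← pow_succ',
      ← Nat.sub_add_comm (kochBirth_le v)]
    rfl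
  | t + 1, Sum.inr w => by
    rw [kochCornerCount_succ_inr]
    simp [KochBirth]

lemma kochGraph_degree_zero (v : KochVertex m 0) : (KochGraph m 0).degree v = 2 := by
  rw [SimpleGraph.degree_eq_sum_ite]
  simp only [kochGraph_adj_zero, ← card_filter, filter_ne, card_erase_of_mem (mem_univ v)]
  rfl

/- Stated with `KochInl`: `Sum.inl v` has the unfolded sum type, at which instance search does not
find the `Fintype` instance on its neighbour set. -/
lemma kochGraph_degree_kochInl (v : KochVertex m t) :
    (KochGraph m (t+1)).degree (KochInl m t v)
      = (KochGraph m t).degree v + 2 * m * kochCornerCount m t v := by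
  rw [SimpleGraph.degree_eq_sum_ite, sum_kochVertex_succ, SimpleGraph.degree_eq_sum_ite,
    kochCornerCount, card_filter]
  simp only [KochInl, Fintype.sum_prod_type, kochGraph_adj_inl_inl, kochGraph_adj_inl_inr,
    Finset.sum_const, Finset.card_univ, Fintype.card_fin, smul_eq_mul, Finset.mul_sum]
  congr 1
  exact sum_congr rfl fun _ _ => sum_congr rfl fun _ _ => by ring

lemma kochGraph_degree_of_kochBirth_eq_succ {x : KochVertex m (t+1)}
    (hx : KochBirth m (t+1) x = t + 1) :
    (KochGraph m (t+1)).degree x = 2 := by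
  rw [SimpleGraph.degree_eq_sum_ite, sum_kochVertex_succ]
  rcases x with v | ⟨τ, c, g, p⟩
  · exact absurd hx ((kochBirth_le v).trans_lt t.lt_succ_self).ne
  simp only [Fintype.sum_prod_type, (KochGraph m (t+1)).adj_comm (Sum.inr _) (Sum.inl _),
    kochGraph_adj_inl_inr, kochGraph_adj_inr_inr]
  fin_cases p <;> simp [ite_and, Fin.sum_univ_two]

lemma kochGraph_degree_eq_two_mul_kochCornerCount : ∀ {t} (v : KochVertex m t),
    (KochGraph m t).degree v = 2 * kochCornerCount m t v
  | 0, v => by rw [kochGraph_degree_zero, kochCornerCount_zero]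
  | t + 1, Sum.inl v => (kochGraph_degree_kochInl v).trans <| by
    rw [kochGraph_degree_eq_two_mul_kochCornerCount v, kochCornerCount_succ_inl]
    ring
  | t + 1, Sum.inr w => (kochGraph_degree_of_kochBirth_eq_succ rfl).trans <| by
    rw [kochCornerCount_succ_inr]

theorem kochGraph_degree_eq (v : KochVertex m t) :
    (KochGraph m t).degree v = 2 * (m + 1) ^ (t - KochBirth m t v) := by
  rw [kochGraph_degree_eq_two_mul_kochCornerCount, kochCornerCount_eq_pow]

theorem kochGraph_degree_eq_iff (hm : 1 ≤ m) {j : ℕ} (hj : j ≤ t) (v : KochVertex m t) :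
    (KochGraph m t).degree v = 2 * (m + 1) ^ (t - j) ↔ KochBirth m t v = j := by
  rw [kochGraph_degree_eq, mul_right_inj' two_ne_zero,
    (Nat.pow_right_injective (by omega : 2 ≤ m + 1)).eq_iff]
  have := kochBirth_le v
  omega

lemma card_kochBirth_succ_eq_of_ne {j : ℕ} (hj : j ≠ t + 1) :
    #{v : KochVertex m (t+1) | KochBirth m (t+1) v = j}
      = #{v : KochVertex m t | KochBirth m t v = j} := by
  simp only [card_filter, sum_kochVertex_succ, KochBirth, hj.symm, if_false, sum_const_zero,
    add_zero]
  -- the two sides differ only in a `Decidable` instance that still mentions `Sum.inl u`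
  rfl

lemma card_kochBirth_succ_eq_succ :
    #{v : KochVertex m (t+1) | KochBirth m (t+1) v = t + 1} = 6 * m * (3 * m + 1) ^ t := by
  rw [card_filter, sum_kochVertex_succ]
  simp [KochBirth, ((kochBirth_le _).trans_lt t.lt_succ_self).ne, card_kochTri]
  ring

theorem card_kochBirth_eq_zero : ∀ t, #{v : KochVertex m t | KochBirth m t v = 0} = 3
  | 0 => rfl
  | t + 1 => by rw [card_kochBirth_succ_eq_of_ne t.succ_ne_zero.symm, card_kochBirth_eq_zero t]

theorem card_kochBirth_eq {i : ℕ} (hi : 1 ≤ i) (hit : i ≤ t) :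
    #{v : KochVertex m t | KochBirth m t v = i} = 6 * m * (3 * m + 1) ^ (i - 1) := by
  induction t, hit using Nat.le_induction with
  | base =>
    obtain ⟨j, rfl⟩ : ∃ j, i = j + 1 := ⟨i - 1, by omega⟩
    exact card_kochBirth_succ_eq_succ
  | succ t hit ih => rw [card_kochBirth_succ_eq_of_ne (by omega), ih]

end

/-- For all integers m ≥ 1, t ≥ 0 and 1 ≤ i ≤ t, the number of vertices of
`K_{m,t}` with degree exactly `2(m+1)^(t-i)` equals `6m(3m+1)^(i-1)`, and the number of
vertices of degree exactly `2(m+1)^t` equals 3, and these are exactly the initial vertices. -/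
theorem koch_degree_distribution (m i t : ℕ) (hm : 1 ≤ m) (hi : 1 ≤ i) (hit : i ≤ t) :
    (Finset.univ.filter fun v : KochVertex m t =>
        (KochGraph m t).degree v = 2 * (m + 1) ^ (t - i)).card = 6 * m * (3 * m + 1) ^ (i - 1)
    ∧ (Finset.univ.filter fun v : KochVertex m t =>
        (KochGraph m t).degree v = 2 * (m + 1) ^ t).card = 3
    ∧ (Finset.univ.filter fun v : KochVertex m t =>
        (KochGraph m t).degree v = 2 * (m + 1) ^ t)
      = (Finset.univ.filter fun v : KochVertex m t => KochBirth m t v = 0) := by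
  have degree_level : ∀ j ≤ t,
      (univ.filter fun v : KochVertex m t => (KochGraph m t).degree v = 2 * (m + 1) ^ (t - j))
        = univ.filter fun v => KochBirth m t v = j := fun j hj =>
    filter_congr fun v _ => kochGraph_degree_eq_iff hm hj v
  have initial := degree_level 0 t.zero_le
  rw [Nat.sub_zero] at initial
  refine ⟨?_, ?_, initial⟩
  · rw [degree_level i hit, card_kochBirth_eq hi hit]
  · rw [initial, card_kochBirth_eq_zero]
end

section
/- For all integers m ≥ 1 and t ≥ 0, the average path length of the Koch network K_{m,t}, i.e. the average of the graph distance d(u,v) over all unordered pairs of distinct vertices u, v, equals [3m+5+(24mt+24m+4)(3m+1)^t] / {3(3m+1)[2(3m+1)^t+1]}. -/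
/-!
Attaching the new triangles at step `t+1` does not change distances between old vertices, and
a new vertex is one step further than its anchor (the corner it hangs from) from every vertex
outside its own pair. So every distance sum at step `t+1` is expressed through three sums at
step `t`: the total distance `D = ∑ d(u,v)`, `F = ∑ w(u) d(u,v)` and `G = ∑ w(u) w(v) d(u,v)`,
where `w(v)` is the number of triangles having `v` as a corner. The triple `(D, F, G)` obeys an
explicit linear recurrence, which is solved in closed form.
-/

namespace SimpleGraph

variable {V W : Type*} {G : SimpleGraph V} {H : SimpleGraph W}

lemma Walk.dist_le_length_of_adj_imp {ψ : W → V}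
    (hψ : ∀ x y, H.Adj x y → ψ x = ψ y ∨ G.Adj (ψ x) (ψ y)) (hG : G.Connected) {a b : W}
    (w : H.Walk a b) : G.dist (ψ a) (ψ b) ≤ w.length := by
  induction w with
  | nil => simp
  | @cons x y z hxy q ih =>
    rw [length_cons]
    rcases hψ x y hxy with hxy' | hxy'
    · rw [hxy']; omega
    · have := hG.dist_triangle (u := ψ x) (v := ψ y) (w := ψ z)
      rw [dist_eq_one_iff_adj.mpr hxy'] at this
      omega

lemma Walk.dist_add_one_le_length_of_pendant {S : Set V} {f : V}
    (hS : ∀ x ∈ S, ∀ y, G.Adj x y → y ∈ S ∨ y = f) {a b : V} (w : G.Walk a b)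
    (ha : a ∈ S) (hb : b ∉ S) : G.dist f b + 1 ≤ w.length := by
  induction w with
  | nil => exact absurd ha hb
  | @cons x y z hxy q ih =>
    rw [length_cons]
    rcases hS x ha y hxy with hy | rfl
    · have := ih hy hb; omega
    · have := dist_le q; omega

lemma Connected.dist_eq_dist_add_one_of_pendant (hG : G.Connected) {S : Set V} {f a b : V}
    (hS : ∀ x ∈ S, ∀ y, G.Adj x y → y ∈ S ∨ y = f) (ha : a ∈ S) (haf : G.Adj a f)
    (hb : b ∉ S) : G.dist a b = G.dist f b + 1 := by
  refine le_antisymm ?_ ?_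
  · have := hG.dist_triangle (u := a) (v := f) (w := b)
    rw [dist_eq_one_iff_adj.mpr haf] at this
    omega
  · obtain ⟨w, hw⟩ := (hG a b).exists_walk_length_eq_dist
    exact hw ▸ w.dist_add_one_le_length_of_pendant hS ha hb

lemma sum_dist_top [Fintype V] [DecidableEq V] (u : V) :
    ∑ v, ((⊤ : SimpleGraph V).dist u v : ℝ) = Fintype.card V - 1 := by
  have hV : 1 ≤ Fintype.card V := Fintype.card_pos_iff.mpr ⟨u⟩
  simp [dist_top, Finset.sum_ite, Finset.filter_ne, Finset.card_erase_of_mem, Nat.cast_sub hV]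

end SimpleGraph

open SimpleGraph

namespace KochGraph

variable {m t : ℕ}

/-- A vertex born at step `t+1`: (old triangle, corner, group index, position in the group). -/
abbrev NewVertex (m t : ℕ) : Type := KochTri m t × Fin 3 × Fin m × Fin 2

def NewVertex.toVertex (q : NewVertex m t) : KochVertex m (t+1) := .inr q

def NewVertex.anchor (q : NewVertex m t) : KochVertex m t := KochCorner m t q.1 q.2.1

lemma corner_succ_inr (τ : KochTri m t) (c : Fin 3) (g : Fin m) :
    KochCorner m (t+1) (.inr (τ, c, g)) =
      ![.inl (KochCorner m t τ c), .inr (τ, c, g, 0), .inr (τ, c, g, 1)] := by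
  funext i; rfl

lemma adj_inl_inl {u v : KochVertex m t} :
    (KochGraph m (t+1)).Adj (KochInl m t u) (KochInl m t v) ↔ (KochGraph m t).Adj u v := by
  constructor
  · rintro ⟨hne, σ | ⟨τ, c, g⟩, i, j, hi, hj⟩
    · exact ⟨fun h => hne (congrArg _ h), σ, i, j, Sum.inl_injective hi, Sum.inl_injective hj⟩
    · rw [corner_succ_inr] at hi hj
      fin_cases i <;> fin_cases j <;> cases hi <;> cases hj
      exact (hne rfl).elim
  · rintro ⟨hne, τ, i, j, rfl, rfl⟩
    exact ⟨fun h => hne (Sum.inl_injective h), .inl τ, i, j, rfl, rfl⟩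

lemma adj_inl_toVertex {u : KochVertex m t} {q : NewVertex m t} :
    (KochGraph m (t+1)).Adj (KochInl m t u) q.toVertex ↔ u = q.anchor := by
  obtain ⟨τ, c, g, p⟩ := q
  constructor
  · rintro ⟨-, σ | ⟨τ', c', g'⟩, i, j, hi, hj⟩
    · exact absurd hj Sum.inl_ne_inr
    · rw [corner_succ_inr] at hi hj
      fin_cases i <;> fin_cases j <;> cases hi <;> cases hj <;> rfl
  · rintro rfl
    refine ⟨Sum.inl_ne_inr, .inr (τ, c, g), 0, p.succ, rfl, ?_⟩
    fin_cases p <;> rfl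

lemma adj_toVertex_toVertex {q q' : NewVertex m t} :
    (KochGraph m (t+1)).Adj q.toVertex q'.toVertex ↔
      q.1 = q'.1 ∧ q.2.1 = q'.2.1 ∧ q.2.2.1 = q'.2.2.1 ∧ q.2.2.2 ≠ q'.2.2.2 := by
  obtain ⟨τ, c, g, p⟩ := q
  obtain ⟨τ', c', g', p'⟩ := q'
  constructor
  · rintro ⟨hne, σ | ⟨τ'', c'', g''⟩, i, j, hi, hj⟩
    · exact absurd hi Sum.inl_ne_inr
    · rw [corner_succ_inr] at hi hj
      fin_cases i <;> fin_cases j <;> cases hi <;> cases hj <;>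
        first | exact (hne rfl).elim | simp
  · rintro ⟨rfl, rfl, rfl, hp⟩
    refine ⟨fun h => hp (by cases h; rfl), .inr (τ, c, g), p.succ, p'.succ, ?_, ?_⟩ <;>
      fin_cases p <;> fin_cases p' <;> rfl

lemma zero_eq_top : KochGraph m 0 = ⊤ := by
  ext u v
  exact ⟨fun h => h.1, fun h => ⟨h, (), u, v, rfl, rfl⟩⟩

def inlHom (m t : ℕ) : KochGraph m t →g KochGraph m (t+1) := ⟨KochInl m t, adj_inl_inl.mpr⟩

def retract : KochVertex m (t+1) → KochVertex m t := Sum.elim id NewVertex.anchor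

lemma retract_adj {x y : KochVertex m (t+1)} (h : (KochGraph m (t+1)).Adj x y) :
    retract x = retract y ∨ (KochGraph m t).Adj (retract x) (retract y) := by
  rcases x with u | q <;> rcases y with v | q'
  · exact .inr (adj_inl_inl.mp h)
  · exact .inl (adj_inl_toVertex.mp h)
  · exact .inl (adj_inl_toVertex.mp h.symm).symm
  · obtain ⟨h1, h2, -⟩ := adj_toVertex_toVertex.mp h
    exact .inl (by simp [retract, NewVertex.anchor, h1, h2])

lemma reachable_inl_retract (x : KochVertex m (t+1)) :
    (KochGraph m (t+1)).Reachable x (KochInl m t (retract x)) := by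
  rcases x with u | q
  · rfl
  · exact (adj_inl_toVertex.mpr rfl).symm.reachable

lemma connected (m : ℕ) : ∀ t, (KochGraph m t).Connected
  | 0 => by
    rw [zero_eq_top]
    exact @connected_top _ ⟨(0 : Fin 3)⟩
  | t+1 => by
    refine (connected_iff _).mpr ⟨fun x y => ?_, ⟨.inl (connected m t).nonempty.some⟩⟩
    exact (reachable_inl_retract x).trans <|
      (((connected m t) _ _).map (inlHom m t)).trans (reachable_inl_retract y).symm

lemma dist_inl_inl (u v : KochVertex m t) :
    (KochGraph m (t+1)).dist (KochInl m t u) (KochInl m t v) = (KochGraph m t).dist u v := by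
  refine le_antisymm ?_ ?_
  · obtain ⟨w, hw⟩ := (connected m t).exists_walk_length_eq_dist u v
    exact (dist_le (w.map (inlHom m t))).trans_eq (by rw [Walk.length_map, hw])
  · obtain ⟨w, hw⟩ :=
      (connected m (t+1)).exists_walk_length_eq_dist (KochInl m t u) (KochInl m t v)
    exact hw ▸ w.dist_le_length_of_adj_imp (fun _ _ => retract_adj) (connected m t)

def NewVertex.group (q : NewVertex m t) : Set (KochVertex m (t+1)) :=
  Set.range fun p => NewVertex.toVertex (q.1, q.2.1, q.2.2.1, p)

lemma dist_toVertex_of_notMem_group {q : NewVertex m t} {x : KochVertex m (t+1)}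
    (hx : x ∉ q.group) :
    (KochGraph m (t+1)).dist q.toVertex x =
      (KochGraph m (t+1)).dist (KochInl m t q.anchor) x + 1 := by
  refine (connected m (t+1)).dist_eq_dist_add_one_of_pendant (S := q.group) ?_
    (Set.mem_range_self _) (adj_inl_toVertex.mpr rfl).symm hx
  rintro _ ⟨p, rfl⟩ (v | ⟨τ', c', g', p'⟩) h
  · exact .inr (by rw [adj_inl_toVertex.mp h.symm]; rfl)
  · obtain ⟨rfl, rfl, rfl, -⟩ := adj_toVertex_toVertex.mp h
    exact .inl (Set.mem_range_self _)

lemma dist_inl_toVertex (u : KochVertex m t) (q : NewVertex m t) :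
    (KochGraph m (t+1)).dist (KochInl m t u) q.toVertex = (KochGraph m t).dist u q.anchor + 1 := by
  rw [dist_comm (G := KochGraph m (t+1)),
    dist_toVertex_of_notMem_group (by rintro ⟨p, h⟩; cases h),
    dist_inl_inl, dist_comm]

lemma dist_toVertex_toVertex_of_notMem_group {q q' : NewVertex m t} (h : q'.toVertex ∉ q.group) :
    (KochGraph m (t+1)).dist q.toVertex q'.toVertex =
      (KochGraph m t).dist q.anchor q'.anchor + 2 := by
  rw [dist_toVertex_of_notMem_group h, dist_inl_toVertex]

lemma sum_dist_toVertex (q : NewVertex m t) :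
    ∑ q' : NewVertex m t, ((KochGraph m (t+1)).dist q.toVertex q'.toVertex : ℝ) =
      ∑ q' : NewVertex m t, (((KochGraph m t).dist q.anchor q'.anchor : ℝ) + 2) - 3 := by
  obtain ⟨τ, c, g, p⟩ := q
  have hp : p ≠ p.rev := by fin_cases p <;> decide
  have hsib : (KochGraph m (t+1)).Adj (NewVertex.toVertex (τ, c, g, p))
      (NewVertex.toVertex (τ, c, g, p.rev)) :=
    adj_toVertex_toVertex.mpr ⟨rfl, rfl, rfl, hp⟩
  -- Only `q` itself (distance 0) and its sibling (distance 1) fall short of `d + 2`.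
  have hsum : ∑ q' : NewVertex m t, ((((KochGraph m t).dist (KochCorner m t τ c) q'.anchor : ℝ)
      + 2) - (KochGraph m (t+1)).dist (NewVertex.toVertex (τ, c, g, p)) q'.toVertex) = 3 := by
    rw [Fintype.sum_eq_add (τ, c, g, p) (τ, c, g, p.rev) (by simpa using hp)]
    · simp [NewVertex.anchor, dist_eq_one_iff_adj.mpr hsib]
      norm_num
    · rintro ⟨τ', c', g', p'⟩ hne
      rw [dist_toVertex_toVertex_of_notMem_group]
      · simp [NewVertex.anchor]
      · rintro ⟨p'', h⟩
        cases h
        simp only [ne_eq, Prod.mk.injEq, true_and] at hne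
        fin_cases p <;> fin_cases p' <;> simp_all
  simp only [NewVertex.anchor] at hsum ⊢
  rw [← hsum, Finset.sum_sub_distrib]
  ring

lemma card_tri (m : ℕ) : ∀ t, Fintype.card (KochTri m t) = (3*m+1)^t
  | 0 => rfl
  | t+1 => by
    change Fintype.card (KochTri m t ⊕ (KochTri m t × Fin 3 × Fin m)) = _
    simp only [Fintype.card_sum, Fintype.card_prod, Fintype.card_fin, card_tri m t]
    ring

lemma card_vertex (m : ℕ) : ∀ t, Fintype.card (KochVertex m t) = 2*(3*m+1)^t + 1
  | 0 => rfl
  | t+1 => by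
    change Fintype.card (KochVertex m t ⊕ NewVertex m t) = _
    simp only [Fintype.card_sum, Fintype.card_prod, Fintype.card_fin, card_vertex m t, card_tri]
    ring

lemma sum_vertex_succ {M : Type*} [AddCommMonoid M] (h : KochVertex m (t+1) → M) :
    ∑ x, h x = ∑ u, h (KochInl m t u) + ∑ q : NewVertex m t, h q.toVertex :=
  Fintype.sum_sum_type h

def cornerSum (m t : ℕ) (h : KochVertex m t → ℝ) : ℝ :=
  ∑ τ, ∑ i : Fin 3, h (KochCorner m t τ i)

lemma cornerSum_add (f g : KochVertex m t → ℝ) :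
    cornerSum m t (fun v => f v + g v) = cornerSum m t f + cornerSum m t g := by
  simp only [cornerSum, Finset.sum_add_distrib]

lemma cornerSum_const_mul (a : ℝ) (f : KochVertex m t → ℝ) :
    cornerSum m t (fun v => a * f v) = a * cornerSum m t f := by
  simp only [cornerSum, Finset.mul_sum]

lemma cornerSum_const (b : ℝ) : cornerSum m t (fun _ => b) = 3 * (3*m+1)^t * b := by
  simp [cornerSum, card_tri]
  ring

lemma cornerSum_zero (h : KochVertex m 0 → ℝ) :
    cornerSum m 0 h = ∑ i : Fin 3, h (KochCorner m 0 () i) :=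
  Fintype.sum_unique (ι := Unit) _

lemma sum_anchor (k : KochVertex m t → ℝ) :
    ∑ q : NewVertex m t, k q.anchor = 2 * m * cornerSum m t k := by
  simp only [cornerSum, Finset.mul_sum, Fintype.sum_prod_type, NewVertex.anchor, Finset.sum_const,
    Finset.card_univ, Fintype.card_prod, Fintype.card_fin, nsmul_eq_mul]
  refine Finset.sum_congr rfl fun _ _ => Finset.sum_congr rfl fun _ _ => ?_
  push_cast
  ring

lemma cornerSum_succ (h : KochVertex m (t+1) → ℝ) :
    cornerSum m (t+1) h =
      (m + 1) * cornerSum m t (fun u => h (KochInl m t u)) +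
        ∑ q : NewVertex m t, h q.toVertex := by
  have hnew : ∀ τ c g, ∑ i, h (KochCorner m (t+1) (.inr (τ, c, g)) i) =
      h (KochInl m t (KochCorner m t τ c)) +
        ∑ p : Fin 2, h (NewVertex.toVertex (τ, c, g, p)) := by
    intro τ c g
    rw [Fin.sum_univ_three, Fin.sum_univ_two, add_assoc]
    rfl
  change ∑ σ : KochTri m t ⊕ (KochTri m t × Fin 3 × Fin m), _ = _
  rw [Fintype.sum_sum_type, Fintype.sum_prod_type]
  simp only [Fintype.sum_prod_type, hnew, Finset.sum_add_distrib, Finset.sum_const,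
    Finset.card_univ, Fintype.card_fin, nsmul_eq_mul, ← Finset.mul_sum]
  change cornerSum m t (fun u => h (KochInl m t u)) +
    (m * cornerSum m t (fun u => h (KochInl m t u)) + _) = _
  ring

lemma card_newVertex : (Fintype.card (NewVertex m t) : ℝ) = 6 * m * (3*m+1)^t := by
  simp only [Fintype.card_prod, Fintype.card_fin, card_tri]
  push_cast
  ring

lemma dist_toVertex_inl (q : NewVertex m t) (u : KochVertex m t) :
    (KochGraph m (t+1)).dist q.toVertex (KochInl m t u) = (KochGraph m t).dist q.anchor u + 1 := by
  rw [dist_comm, dist_inl_toVertex, dist_comm]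

noncomputable def transmission (m t : ℕ) (u : KochVertex m t) : ℝ :=
  ∑ v, ((KochGraph m t).dist u v : ℝ)

noncomputable def cornerTransmission (m t : ℕ) (u : KochVertex m t) : ℝ :=
  cornerSum m t fun v => ((KochGraph m t).dist u v : ℝ)

lemma sum_dist_anchor (u : KochVertex m t) :
    ∑ q : NewVertex m t, ((KochGraph m t).dist u q.anchor : ℝ) =
      2 * m * cornerTransmission m t u :=
  sum_anchor fun v => ((KochGraph m t).dist u v : ℝ)

lemma transmission_inl (u : KochVertex m t) :
    transmission m (t+1) (KochInl m t u) =
      transmission m t u + 2 * m * cornerTransmission m t u + 6 * m * (3*m+1)^t := by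
  simp only [transmission, cornerTransmission, sum_vertex_succ, dist_inl_inl, dist_inl_toVertex,
    Nat.cast_add, Nat.cast_one, Finset.sum_add_distrib, sum_dist_anchor, Finset.sum_const,
    Finset.card_univ, card_newVertex, nsmul_eq_mul]
  ring

lemma transmission_toVertex (q : NewVertex m t) :
    transmission m (t+1) q.toVertex = transmission m t q.anchor +
      2 * m * cornerTransmission m t q.anchor + (12 * m + 2) * (3*m+1)^t - 2 := by
  simp only [transmission, cornerTransmission, sum_vertex_succ, dist_toVertex_inl,
    sum_dist_toVertex, Nat.cast_add, Nat.cast_one, Finset.sum_add_distrib, sum_dist_anchor,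
    Finset.sum_const, Finset.card_univ, card_newVertex, card_vertex, nsmul_eq_mul]
  push_cast
  ring

lemma cornerTransmission_inl (u : KochVertex m t) :
    cornerTransmission m (t+1) (KochInl m t u) =
      (3 * m + 1) * cornerTransmission m t u + 6 * m * (3*m+1)^t := by
  simp only [cornerTransmission, cornerSum_succ, dist_inl_inl, dist_inl_toVertex,
    Nat.cast_add, Nat.cast_one, Finset.sum_add_distrib, sum_dist_anchor, Finset.sum_const,
    Finset.card_univ, card_newVertex, nsmul_eq_mul]
  ring

lemma cornerTransmission_toVertex (q : NewVertex m t) :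
    cornerTransmission m (t+1) q.toVertex =
      (3 * m + 1) * cornerTransmission m t q.anchor + (15 * m + 3) * (3*m+1)^t - 3 := by
  simp only [cornerTransmission, cornerSum_succ, dist_toVertex_inl, sum_dist_toVertex,
    Nat.cast_add, Nat.cast_one, cornerSum_add, cornerSum_const, Finset.sum_add_distrib,
    sum_dist_anchor, Finset.sum_const, Finset.card_univ, card_newVertex, nsmul_eq_mul]
  ring

noncomputable def distSum (m t : ℕ) : ℝ := ∑ u, transmission m t u

noncomputable def cornerDistSum (m t : ℕ) : ℝ := cornerSum m t (transmission m t)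

noncomputable def cornerCornerDistSum (m t : ℕ) : ℝ := cornerSum m t (cornerTransmission m t)

lemma sum_cornerTransmission : ∑ u, cornerTransmission m t u = cornerDistSum m t := by
  simp only [cornerTransmission, cornerDistSum, cornerSum, transmission]
  rw [Finset.sum_comm]
  refine Finset.sum_congr rfl fun τ _ => ?_
  rw [Finset.sum_comm]
  exact Finset.sum_congr rfl fun i _ => Finset.sum_congr rfl fun u _ => by rw [dist_comm]

lemma distSum_succ : distSum m (t+1) = distSum m t + 4 * m * cornerDistSum m t +
    4 * m ^ 2 * cornerCornerDistSum m t + (72 * m ^ 2 + 24 * m) * ((3*m+1)^t) ^ 2 -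
      6 * m * (3*m+1)^t := by
  simp only [distSum, sum_vertex_succ, transmission_inl, transmission_toVertex,
    Finset.sum_add_distrib, Finset.sum_sub_distrib, ← Finset.mul_sum, Finset.sum_const,
    Finset.card_univ, card_vertex, card_newVertex, nsmul_eq_mul, sum_cornerTransmission]
  rw [sum_anchor (transmission m t), sum_anchor (cornerTransmission m t)]
  push_cast
  simp only [cornerDistSum, cornerCornerDistSum]
  ring

lemma cornerDistSum_succ : cornerDistSum m (t+1) = (3 * m + 1) * cornerDistSum m t +
    2 * m * (3 * m + 1) * cornerCornerDistSum m t + (90 * m ^ 2 + 30 * m) * ((3*m+1)^t) ^ 2 -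
      12 * m * (3*m+1)^t := by
  simp only [cornerDistSum, cornerSum_succ, transmission_inl, transmission_toVertex,
    cornerSum_add, cornerSum_const_mul, cornerSum_const, Finset.sum_add_distrib,
    Finset.sum_sub_distrib, ← Finset.mul_sum, Finset.sum_const, Finset.card_univ,
    card_newVertex, nsmul_eq_mul]
  rw [sum_anchor (transmission m t), sum_anchor (cornerTransmission m t)]
  simp only [cornerCornerDistSum]
  ring

lemma cornerCornerDistSum_succ : cornerCornerDistSum m (t+1) =
    (3 * m + 1) ^ 2 * cornerCornerDistSum m t + (108 * m ^ 2 + 36 * m) * ((3*m+1)^t) ^ 2 -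
      18 * m * (3*m+1)^t := by
  simp only [cornerCornerDistSum, cornerSum_succ, cornerTransmission_inl,
    cornerTransmission_toVertex, cornerSum_add, cornerSum_const_mul, cornerSum_const,
    Finset.sum_add_distrib, Finset.sum_sub_distrib, ← Finset.mul_sum, Finset.sum_const,
    Finset.card_univ, card_newVertex, nsmul_eq_mul]
  rw [sum_anchor (cornerTransmission m t)]
  ring

lemma transmission_zero (u : KochVertex m 0) : transmission m 0 u = 2 := by
  rw [transmission, zero_eq_top, sum_dist_top, card_vertex]
  norm_num

lemma cornerTransmission_zero (u : KochVertex m 0) : cornerTransmission m 0 u = 2 := by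
  rw [cornerTransmission, cornerSum_zero]
  exact transmission_zero u

lemma distSum_zero : distSum m 0 = 6 := by
  simp [distSum, transmission_zero, card_vertex]
  norm_num

lemma cornerDistSum_zero : cornerDistSum m 0 = 6 := by
  simp [cornerDistSum, cornerSum_zero, transmission_zero]
  norm_num

lemma cornerCornerDistSum_zero : cornerCornerDistSum m 0 = 6 := by
  simp [cornerCornerDistSum, cornerSum_zero, cornerTransmission_zero]
  norm_num

lemma cornerCornerDistSum_eq (m t : ℕ) : (3 * m + 1) * cornerCornerDistSum m t =
    18 * m * (2 * t + 1) * ((3*m+1)^t) ^ 2 + 6 * (3*m+1)^t := by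
  induction t with
  | zero => rw [cornerCornerDistSum_zero]; norm_num; ring
  | succ t ih =>
    rw [cornerCornerDistSum_succ, pow_succ]
    push_cast
    linear_combination (3 * (m:ℝ) + 1) ^ 2 * ih

lemma cornerDistSum_eq (m t : ℕ) : (3 * m + 1) * cornerDistSum m t =
    (24 * m * t + 18 * m + 2) * ((3*m+1)^t) ^ 2 + 4 * (3*m+1)^t := by
  induction t with
  | zero => rw [cornerDistSum_zero]; norm_num; ring
  | succ t ih =>
    rw [cornerDistSum_succ, pow_succ]
    push_cast
    linear_combination
      (3 * (m:ℝ) + 1) * ih + 2 * (m:ℝ) * (3 * m + 1) * cornerCornerDistSum_eq m t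

lemma distSum_eq (m t : ℕ) : 3 * (3 * m + 1) * distSum m t =
    2 * (3 * m + 5) * (3*m+1)^t + 2 * (24 * m * t + 24 * m + 4) * ((3*m+1)^t) ^ 2 := by
  induction t with
  | zero => rw [distSum_zero]; norm_num; ring
  | succ t ih =>
    rw [distSum_succ, pow_succ]
    push_cast
    linear_combination
      ih + 12 * (m:ℝ) * cornerDistSum_eq m t + 12 * (m:ℝ) ^ 2 * cornerCornerDistSum_eq m t

end KochGraph

theorem koch_average_path_length_general (m t : ℕ) :
    ((∑ u : KochVertex m t, ∑ v : KochVertex m t, ((KochGraph m t).dist u v : ℝ)) / 2) /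
        ((Fintype.card (KochVertex m t) : ℝ) * ((Fintype.card (KochVertex m t) : ℝ) - 1) / 2)
      = (3 * (m : ℝ) + 5 + (24 * m * t + 24 * m + 4) * (3 * m + 1) ^ t) /
          (3 * (3 * (m : ℝ) + 1) * (2 * (3 * m + 1) ^ t + 1)) := by
  change (KochGraph.distSum m t / 2) / _ = _
  rw [KochGraph.card_vertex]
  push_cast
  rw [add_sub_cancel_right, div_eq_div_iff (by positivity) (by positivity)]
  linear_combination (2 * (3 * (m:ℝ) + 1) ^ t + 1) / 2 * KochGraph.distSum_eq m t

/-- For all integers m ≥ 1 and t ≥ 0, the average of the graph distance over all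
unordered pairs of distinct vertices of `K_{m,t}` (the sum over ordered pairs halved, divided
by `N(N-1)/2`) equals `[3m+5+(24mt+24m+4)(3m+1)^t] / {3(3m+1)[2(3m+1)^t+1]}`. -/
theorem koch_average_path_length (m t : ℕ) (hm : 1 ≤ m) :
    ((∑ u : KochVertex m t, ∑ v : KochVertex m t, ((KochGraph m t).dist u v : ℝ)) / 2) /
        ((Fintype.card (KochVertex m t) : ℝ) * ((Fintype.card (KochVertex m t) : ℝ) - 1) / 2)
      = (3 * (m : ℝ) + 5 + (24 * m * t + 24 * m + 4) * (3 * m + 1) ^ t) /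
          (3 * (3 * (m : ℝ) + 1) * (2 * (3 * m + 1) ^ t + 1)) :=
  koch_average_path_length_general m t
end
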